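/- The functor φ : Glid FR → Prefrag FR is fully faithful and admits a left adjoint ψ := Q∘j_L. -/

import Mathlib

set_option linter.unusedSectionVars false
set_option maxHeartbeats 1000000
set_option synthInstance.maxHeartbeats 1000000
set_option maxHeartbeats 2000000

noncomputable section

open CategoryTheory CategoryTheory.Limits

universe u

namespace GliderPaper

/-- A `Γ`-filtration `FR` on a unital ring `R`: additive subgroups `F γ` with
`1 ∈ F 1`, monotone in `γ`, and multiplicative. -/
structure RingFiltration (Γ : Type u) [Group Γ] [PartialOrder Γ] (R : Type u) [Ring R] where
  F : Γ → AddSubgroup R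
  one_mem : (1 : R) ∈ F 1
  mono : ∀ {α β : Γ}, α ≤ β → F α ≤ F β
  mul_mem : ∀ {α β : Γ} {a b : R}, a ∈ F α → b ∈ F β → a * b ∈ F (α * β)

variable {Γ : Type u} [Group Γ] [PartialOrder Γ]
  [CovariantClass Γ Γ (· * ·) (· ≤ ·)] [CovariantClass Γ Γ (Function.swap (· * ·)) (· ≤ ·)]
  {R : Type u} [Ring R]

/-- Objects of the extended filtered companion category `oFF_Λ R`:
the disjoint union `Λ ⊔ {∞}`. -/
inductive OFF (FR : RingFiltration Γ R) (Λ : Set Γ) : Type u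
  | of (α : Λ)
  | infty

/-- Objects of the filtered companion category `FF_Λ R`: the set `Λ`. -/
inductive FF (FR : RingFiltration Γ R) (Λ : Set Γ) : Type u
  | of (α : Λ)

variable (FR : RingFiltration Γ R) (Λ : Set Γ)

namespace OFF

/-- `le X Y` holds iff the canonical morphism `1_{X,Y}` is defined, i.e. `X ≤ Y` in `Λ`,
or `Y = ∞`. -/
def le : OFF FR Λ → OFF FR Λ → Prop
  | of α, of β => (α : Γ) ≤ (β : Γ)
  | _, infty => True
  | infty, of _ => False

open scoped Classical in
/-- The additive subgroup of `R` of morphisms `X ⟶ Y` in `oFF_Λ R`: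
`Hom(α,β) = F_{βα⁻¹}R` for `α ≤ β` in `Λ`, `Hom(X,∞) = R`, and `0` otherwise. -/
noncomputable def homGrp : OFF FR Λ → OFF FR Λ → AddSubgroup R
  | of α, of β => if (α : Γ) ≤ (β : Γ) then FR.F ((β : Γ) * (α : Γ)⁻¹) else ⊥
  | _, infty => ⊤
  | infty, of _ => ⊥

theorem le_refl' : ∀ X : OFF FR Λ, le FR Λ X X
  | of _ => _root_.le_refl _
  | infty => trivial

theorem one_mem_homGrp : ∀ {X Y : OFF FR Λ}, le FR Λ X Y → (1 : R) ∈ homGrp FR Λ X Y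
  | of α, of β, h => by
      have h' : (α : Γ) ≤ (β : Γ) := h
      have h1 : (1 : Γ) ≤ (β : Γ) * (α : Γ)⁻¹ := by
        rw [← mul_inv_cancel (α : Γ)]
        exact mul_le_mul_left h' _
      simpa [homGrp, if_pos h'] using FR.mono h1 FR.one_mem
  | of _, infty, _ => trivial
  | infty, infty, _ => trivial
  | infty, of _, h => h.elim

theorem mul_mem_homGrp : ∀ {X Y Z : OFF FR Λ} {f g : R},
    f ∈ homGrp FR Λ X Y → g ∈ homGrp FR Λ Y Z → g * f ∈ homGrp FR Λ X Z := by
  intro X Y Z f g hf hg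
  cases X <;> cases Y <;> cases Z <;> simp only [homGrp] at hf hg ⊢ <;> try trivial
  case of.of.of a b c =>
    by_cases hab : (a : Γ) ≤ (b : Γ)
    · by_cases hbc : (b : Γ) ≤ (c : Γ)
      · rw [if_pos hab] at hf
        rw [if_pos hbc] at hg
        rw [if_pos (le_trans hab hbc)]
        have := FR.mul_mem hg hf
        rwa [show (c : Γ) * (b : Γ)⁻¹ * ((b : Γ) * (a : Γ)⁻¹) = (c : Γ) * (a : Γ)⁻¹ by
          group] at this
      · rw [if_neg hbc] at hg
        rw [AddSubgroup.mem_bot] at hg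
        subst hg
        simp only [zero_mul]
        exact AddSubgroup.zero_mem _
    · rw [if_neg hab] at hf
      rw [AddSubgroup.mem_bot] at hf
      subst hf
      simp only [mul_zero]
      exact AddSubgroup.zero_mem _
  case of.infty.of a c =>
    rw [AddSubgroup.mem_bot] at hg
    subst hg
    simp only [zero_mul]
    exact AddSubgroup.zero_mem _
  case infty.of.of b c =>
    rw [AddSubgroup.mem_bot] at hf
    subst hf
    simp only [mul_zero]
    exact AddSubgroup.zero_mem _
  case infty.infty.of c =>
    rw [AddSubgroup.mem_bot] at hg
    subst hg
    simp only [zero_mul]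
    exact AddSubgroup.zero_mem _

instance : Category (OFF FR Λ) where
  Hom X Y := homGrp FR Λ X Y
  id X := ⟨1, one_mem_homGrp FR Λ (le_refl' FR Λ X)⟩
  comp f g := ⟨g.1 * f.1, mul_mem_homGrp FR Λ f.2 g.2⟩
  id_comp f := Subtype.ext (mul_one f.1)
  comp_id f := Subtype.ext (one_mul f.1)
  assoc f g h := Subtype.ext (mul_assoc h.1 g.1 f.1).symm

instance : Preadditive (OFF FR Λ) where
  homGroup X Y := inferInstanceAs (AddCommGroup (homGrp FR Λ X Y))
  add_comp _ _ _ f f' g := Subtype.ext (mul_add g.1 f.1 f'.1)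
  comp_add _ _ _ f g g' := Subtype.ext (add_mul g.1 g'.1 f.1)

end OFF

namespace FF

/-- The inclusion of the objects of `FF_Λ R` into those of `oFF_Λ R`. -/
def toOFF : FF FR Λ → OFF FR Λ
  | of α => .of α

instance : Category (FF FR Λ) where
  Hom X Y := OFF.homGrp FR Λ (toOFF FR Λ X) (toOFF FR Λ Y)
  id X := ⟨1, OFF.one_mem_homGrp FR Λ (OFF.le_refl' FR Λ _)⟩
  comp f g := ⟨g.1 * f.1, OFF.mul_mem_homGrp FR Λ f.2 g.2⟩
  id_comp f := Subtype.ext (mul_one f.1)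
  comp_id f := Subtype.ext (one_mul f.1)
  assoc f g h := Subtype.ext (mul_assoc h.1 g.1 f.1).symm

instance : Preadditive (FF FR Λ) where
  homGroup X Y := inferInstanceAs (AddCommGroup (OFF.homGrp FR Λ (toOFF FR Λ X) (toOFF FR Λ Y)))
  add_comp _ _ _ f f' g := Subtype.ext (mul_add g.1 f.1 f'.1)
  comp_add _ _ _ f g g' := Subtype.ext (add_mul g.1 g'.1 f.1)

end FF

/-- The inclusion functor `j : FF_Λ R ⥤ oFF_Λ R`. -/
def jF : FF FR Λ ⥤ OFF FR Λ where
  obj := FF.toOFF FR Λ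
  map f := f
  map_id _ := rfl
  map_comp _ _ := rfl

instance : (jF FR Λ).Additive := ⟨rfl⟩

/-- `Mod C`: the category of additive functors from `C` to abelian groups. -/
abbrev Mod (C : Type u) [Category.{u} C] [Preadditive C] : Type (u + 1) :=
  C ⥤+ AddCommGrpCat.{u}

/-- The component at `X` of a morphism in `Mod C`. -/
def mapp {C : Type u} [Category.{u} C] [Preadditive C] {M N : Mod C} (f : M ⟶ N) (X : C) :
    M.obj.obj X ⟶ N.obj.obj X :=
  (show M.obj ⟶ N.obj from f.hom).app X

/-- The canonical morphism `1_{X,Y}` in `oFF_Λ R`, given by `1_R`. -/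
def unitHom (X Y : OFF FR Λ) (h : OFF.le FR Λ X Y) : X ⟶ Y :=
  ⟨1, OFF.one_mem_homGrp FR Λ h⟩

/-- The canonical morphism `1_{α,β}` in `FF_Λ R`, given by `1_R`. -/
def unitHomFF (α β : Λ) (h : (α : Γ) ≤ (β : Γ)) : (FF.of α : FF FR Λ) ⟶ FF.of β :=
  unitHom FR Λ (.of α) (.of β) h

/-- A module `M` over `oFF_Λ R` is a preglider if all the maps `M(1_{X,Y})` are injective. -/
def IsPreglider (M : Mod (OFF FR Λ)) : Prop :=
  ∀ (X Y : OFF FR Λ) (h : OFF.le FR Λ X Y), Function.Injective (M.obj.map (unitHom FR Λ X Y h))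

/-- A module `M` over `FF_Λ R` is a prefragment if all the maps `M(1_{α,β})` are injective. -/
def IsPrefragment (M : Mod (FF FR Λ)) : Prop :=
  ∀ (α β : Λ) (h : (α : Γ) ≤ (β : Γ)), Function.Injective (M.obj.map (unitHomFF FR Λ α β h))

/-- The category of pregliders: the full subcategory of `Mod (oFF_Λ R)` of pregliders. -/
abbrev Preglid : Type (u + 1) :=
  ObjectProperty.FullSubcategory (fun M : Mod (OFF FR Λ) => IsPreglider FR Λ M)

instance : Preadditive (Preglid FR Λ) := Preadditive.fullSubcategory _

/-- The category of prefragments: the full subcategory of `Mod (FF_Λ R)` of prefragments. -/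
abbrev Prefrag : Type (u + 1) :=
  ObjectProperty.FullSubcategory (fun M : Mod (FF FR Λ) => IsPrefragment FR Λ M)

instance : Preadditive (Prefrag FR Λ) := Preadditive.fullSubcategory _

/-- The inclusion `Preglid FR Λ ⥤ Mod (oFF_Λ R)`. -/
def iotaF : Preglid FR Λ ⥤ Mod (OFF FR Λ) := ObjectProperty.ι _

/-- The inclusion `Prefrag FR Λ ⥤ Mod (FF_Λ R)`. -/
def etaF : Prefrag FR Λ ⥤ Mod (FF FR Λ) := ObjectProperty.ι _

/-- The component at `X` of a morphism of pregliders. -/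
def pgapp {M N : Preglid FR Λ} (f : M ⟶ N) (X : OFF FR Λ) :
    M.obj.obj.obj X ⟶ N.obj.obj.obj X :=
  mapp (show M.obj ⟶ N.obj from f.hom) X

/-- The component at `X` of a morphism of prefragments. -/
def pfapp {M N : Prefrag FR Λ} (f : M ⟶ N) (X : FF FR Λ) :
    M.obj.obj.obj X ⟶ N.obj.obj.obj X :=
  mapp (show M.obj ⟶ N.obj from f.hom) X

/-- The class `Σ` of morphisms of pregliders all of whose components at objects of `Λ`
are isomorphisms. -/
def SigmaClass : MorphismProperty (Preglid FR Λ) :=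
  fun _ _ f => ∀ α : Λ, IsIso (pgapp FR Λ f (.of α))

/-- The category of glider representations: the localization of `Preglid FR Λ` at `Σ`. -/
abbrev Glid : Type (u + 1) := (SigmaClass FR Λ).Localization

/-- The localization functor `Q : Preglid FR Λ ⥤ Glid FR Λ`. -/
def QF : Preglid FR Λ ⥤ Glid FR Λ := (SigmaClass FR Λ).Q

/-- The restriction functor `j^* : Mod (oFF_Λ R) ⥤ Mod (FF_Λ R)`. -/
def jStar : Mod (OFF FR Λ) ⥤ Mod (FF FR Λ) where
  obj M := ⟨jF FR Λ ⋙ M.obj, by haveI : M.obj.Additive := M.property; exact (inferInstance : (jF FR Λ ⋙ M.obj).Additive)⟩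
  map {M N} f := ⟨Functor.whiskerLeft (jF FR Λ) (show M.obj ⟶ N.obj from f.hom)⟩
  map_id _ := rfl
  map_comp _ _ := rfl

theorem isPrefragment_jStar (M : Mod (OFF FR Λ)) (hM : IsPreglider FR Λ M) :
    IsPrefragment FR Λ ((jStar FR Λ).obj M) :=
  fun α β h => hM (.of α) (.of β) h

/-- The restriction functor `j^* : Preglid FR Λ ⥤ Prefrag FR Λ`. -/
def jRes : Preglid FR Λ ⥤ Prefrag FR Λ where
  obj M := ⟨(jStar FR Λ).obj M.obj, isPrefragment_jStar FR Λ M.obj M.property⟩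
  map f := ⟨(jStar FR Λ).map f.hom⟩
  map_id M := InducedCategory.hom_ext ((jStar FR Λ).map_id M.obj)
  map_comp f g := InducedCategory.hom_ext ((jStar FR Λ).map_comp f.hom g.hom)

theorem sigma_isInvertedBy : (SigmaClass FR Λ).IsInvertedBy (jRes FR Λ) := by
  intro M N f hf
  haveI : (AdditiveFunctor.forget (FF FR Λ) AddCommGrpCat.{u}).Faithful :=
    ObjectProperty.faithful_ι _
  haveI : ∀ X : FF FR Λ, IsIso
      (((ObjectProperty.ι (fun M : Mod (FF FR Λ) => IsPrefragment FR Λ M) ⋙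
        AdditiveFunctor.forget _ _).map ((jRes FR Λ).map f)).app X) := by
    rintro ⟨α⟩
    exact hf α
  haveI : IsIso ((ObjectProperty.ι (fun M : Mod (FF FR Λ) => IsPrefragment FR Λ M) ⋙
      AdditiveFunctor.forget _ _).map ((jRes FR Λ).map f)) :=
    NatIso.isIso_of_isIso_app _
  exact isIso_of_reflects_iso ((jRes FR Λ).map f)
    (ObjectProperty.ι (fun M : Mod (FF FR Λ) => IsPrefragment FR Λ M) ⋙
      AdditiveFunctor.forget _ _)

/-- The canonical fully faithful functor `φ : Glid FR Λ ⥤ Prefrag FR Λ`,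
the unique functor with `Q ⋙ φ = j^*`. -/
def phiF : Glid FR Λ ⥤ Prefrag FR Λ :=
  Localization.Construction.lift (jRes FR Λ) (sigma_isInvertedBy FR Λ)

theorem phiF_fac : QF FR Λ ⋙ phiF FR Λ = jRes FR Λ :=
  Localization.Construction.fac _ _


end GliderPaper

/-!
Let `L ⊣ j^* ι` be any adjunction between `Mod FF_Λ R` and `Preglid FR`, with unit `ν` and
counit `ε`. For a preglider `N`, the component of `ν` at `j^* N` is split by `j^* ε_N`; so if it
is an epimorphism, it is an isomorphism, hence so is `j^* ε_N`, i.e. `ε_N ∈ Σ`. Restricting to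
prefragments and localizing at `Σ` then turns `L ⊣ j^* ι` into `Q ∘ L ∘ η ⊣ φ` with invertible
counit, so `φ` is fully faithful.

Whether `ν` is an epimorphism does not depend on `L`, and for the explicit left adjoint
`M ↦ κ (j_! M)` it is: `(κ j_! M)(∞)` is the coend `R ⊗_{FF_Λ R} M`, `(κ j_! M)(α)` is the image
of `M(α)` in it, and the unit maps `M(α)` onto that image. The universal property of `κ (j_! M)`
reduces to that of the coend, because a morphism into a preglider is determined by its component
at `∞`.
-/

namespace CategoryTheory.Adjunction

variable {C D : Type*} [Category* C] [Category* D] {L : D ⥤ C} {G : C ⥤ D}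

lemma isIso_map_counit_app_of_epi (adj : L ⊣ G) (X : C) [Epi (adj.unit.app (G.obj X))] :
    IsIso (G.map (adj.counit.app X)) := by
  have : IsSplitMono (adj.unit.app (G.obj X)) :=
    ⟨⟨G.map (adj.counit.app X), adj.right_triangle_components X⟩⟩
  have := isIso_of_epi_of_isSplitMono (adj.unit.app (G.obj X))
  rw [← IsIso.inv_eq_of_hom_inv_id (adj.right_triangle_components X)]
  infer_instance

lemma epi_unit_app_of_epi {L' : D ⥤ C} (adj : L ⊣ G) (adj' : L' ⊣ G) (Y : D)
    [Epi (adj.unit.app Y)] : Epi (adj'.unit.app Y) := by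
  rw [← unit_leftAdjointUniq_hom_app adj adj']
  infer_instance

variable {E : Type*} [Category* E] (adj : L ⊣ G) (W : MorphismProperty C) (Q : C ⥤ E)
  [Q.IsLocalization W] {G' : E ⥤ D} (e : Q ⋙ G' ≅ G)

def compLocalization : L ⋙ Q ⊣ G' :=
  letI : CatCommSq L (𝟭 D) Q (L ⋙ Q) := ⟨Iso.refl _⟩
  letI : CatCommSq G Q (𝟭 D) G' := ⟨e.symm⟩
  adj.localization (𝟭 D) (MorphismProperty.isomorphisms D) Q W (L ⋙ Q) G'

lemma isIso_compLocalization_counit (hW : ∀ X, W (adj.counit.app X)) :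
    IsIso (adj.compLocalization W Q e).counit := by
  rw [NatTrans.isIso_iff_isIso_app]
  intro Y
  have := Localization.essSurj Q W
  rw [← NatTrans.isIso_app_iff_of_iso _ (Q.objObjPreimageIso Y)]
  let : CatCommSq L (𝟭 D) Q (L ⋙ Q) := ⟨Iso.refl _⟩
  let : CatCommSq G Q (𝟭 D) G' := ⟨e.symm⟩
  have := Localization.inverts Q W _ (hW (Q.objPreimage Y))
  rw [compLocalization, localization_counit_app]
  infer_instance

end CategoryTheory.Adjunction

namespace GliderPaper

variable {Γ : Type u} [Group Γ] [PartialOrder Γ]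
  [CovariantClass Γ Γ (· * ·) (· ≤ ·)] [CovariantClass Γ Γ (Function.swap (· * ·)) (· ≤ ·)]
  {R : Type u} [Ring R] {FR : RingFiltration Γ R} {Λ : Set Γ}

lemma Mod.epi_of_surjective {C : Type u} [Category.{u} C] [Preadditive C] {M N : Mod C}
    (f : M ⟶ N) (hf : ∀ X, Function.Surjective (mapp f X)) : Epi f := by
  have (X : C) : Epi (f.hom.app X) := ConcreteCategory.epi_of_surjective _ (hf X)
  have : Epi f.hom := NatTrans.epi_of_epi_app _
  exact (ObjectProperty.ι _).epi_of_epi_map this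

section OfSubgroups

variable {V : Type u} [AddCommGroup V] [Module R V] (S : OFF FR Λ → AddSubgroup V)
  (hS : ∀ {X Y : OFF FR Λ} (σ : X ⟶ Y), ∀ v ∈ S X, σ.1 • v ∈ S Y)

def subgroupsFunctor : OFF FR Λ ⥤ AddCommGrpCat.{u} where
  obj X := AddCommGrpCat.of (S X)
  map σ := AddCommGrpCat.ofHom
    { toFun := fun v => ⟨σ.1 • v.1, hS σ v.1 v.2⟩
      map_zero' := Subtype.ext (smul_zero _)
      map_add' := fun v w => Subtype.ext (smul_add _ _ _) }
  map_id _ := by ext v; exact one_smul R v.1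
  map_comp σ τ := by ext v; exact mul_smul τ.1 σ.1 v.1

instance : (subgroupsFunctor S hS).Additive where
  map_add {_ _ σ τ} := by ext v; exact Subtype.ext (add_smul σ.1 τ.1 v.1)

def Preglid.ofSubgroups : Preglid FR Λ :=
  ⟨⟨subgroupsFunctor S hS, (inferInstance : (subgroupsFunctor S hS).Additive)⟩,
    fun _ _ _ v w hvw => Subtype.ext
      ((one_smul R v.1).symm.trans ((congrArg Subtype.val hvw).trans (one_smul R w.1)))⟩

end OfSubgroups

section MorphismsToPregliders

lemma OFF.le_infty (X : OFF FR Λ) : OFF.le FR Λ X .infty := by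
  cases X <;> trivial

def toInfty (X : OFF FR Λ) (r : R) : X ⟶ OFF.infty :=
  ⟨r, by cases X <;> exact AddSubgroup.mem_top r⟩

lemma toInfty_infty_one : toInfty (FR := FR) (Λ := Λ) .infty 1 = 𝟙 _ :=
  rfl

lemma comp_toInfty_one {X Y : OFF FR Λ} (σ : X ⟶ Y) :
    σ ≫ toInfty Y 1 = toInfty X 1 ≫ toInfty .infty σ.1 :=
  Subtype.ext ((one_mul σ.1).trans (mul_one σ.1).symm)

lemma injective_map_toInfty_one (P : Preglid FR Λ) (X : OFF FR Λ) :
    Function.Injective (P.obj.obj.map (toInfty X (1 : R))) :=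
  P.property X .infty (OFF.le_infty X)

lemma pgapp_naturality {A P : Preglid FR Λ} (f : A ⟶ P) {X Y : OFF FR Λ} (σ : X ⟶ Y) :
    A.obj.obj.map σ ≫ pgapp FR Λ f Y = pgapp FR Λ f X ≫ P.obj.obj.map σ :=
  f.hom.hom.naturality σ

lemma Preglid.hom_ext {A P : Preglid FR Λ} {f g : A ⟶ P}
    (h : pgapp FR Λ f .infty = pgapp FR Λ g .infty) : f = g := by
  refine InducedCategory.hom_ext (InducedCategory.hom_ext (NatTrans.ext (funext fun X => ?_)))
  ext a
  apply injective_map_toInfty_one P X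
  have hf := ConcreteCategory.congr_hom (pgapp_naturality f (toInfty X 1)) a
  have hg := ConcreteCategory.congr_hom (pgapp_naturality g (toInfty X 1)) a
  simp only [ConcreteCategory.comp_apply] at hf hg
  change P.obj.obj.map _ (pgapp FR Λ f X a) = P.obj.obj.map _ (pgapp FR Λ g X a)
  rw [← hf, ← hg, h]

variable {A P : Preglid FR Λ} (f : A.obj.obj.obj .infty ⟶ P.obj.obj.obj .infty)
  (hrange : ∀ X (a : A.obj.obj.obj X),
    f (A.obj.obj.map (toInfty X 1) a) ∈ (P.obj.obj.map (toInfty X (1 : R))).hom.range)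

def homOfInftyApp (X : OFF FR Λ) : A.obj.obj.obj X ⟶ P.obj.obj.obj X :=
  AddCommGrpCat.ofHom
    ((AddMonoidHom.ofInjective (injective_map_toInfty_one P X)).symm.toAddMonoidHom.comp
      ((A.obj.obj.map (toInfty X 1) ≫ f).hom.codRestrict _ (hrange X)))

lemma homOfInftyApp_comp (X : OFF FR Λ) :
    homOfInftyApp f hrange X ≫ P.obj.obj.map (toInfty X 1) =
      A.obj.obj.map (toInfty X 1) ≫ f := by
  ext a
  exact congrArg Subtype.val
    ((AddMonoidHom.ofInjective (injective_map_toInfty_one P X)).apply_symm_apply _)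

def Preglid.homOfInfty
    (hf : ∀ r : R, A.obj.obj.map (toInfty .infty r) ≫ f = f ≫ P.obj.obj.map (toInfty .infty r)) :
    A ⟶ P :=
  ⟨⟨{ app := homOfInftyApp f hrange
      naturality X Y σ := by
        have : Mono (P.obj.obj.map (toInfty Y 1)) :=
          ConcreteCategory.mono_of_injective _ (injective_map_toInfty_one P Y)
        rw [← cancel_mono (P.obj.obj.map (toInfty Y 1))]
        calc (A.obj.obj.map σ ≫ homOfInftyApp f hrange Y) ≫ P.obj.obj.map (toInfty Y 1)
            = A.obj.obj.map (toInfty X 1) ≫ A.obj.obj.map (toInfty .infty σ.1) ≫ f := by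
              rw [Category.assoc, homOfInftyApp_comp, ← Functor.map_comp_assoc,
                comp_toInfty_one, Functor.map_comp_assoc]
          _ = homOfInftyApp f hrange X ≫ P.obj.obj.map (σ ≫ toInfty Y 1) := by
              rw [hf, ← Category.assoc, ← homOfInftyApp_comp, Category.assoc,
                ← Functor.map_comp, comp_toInfty_one]
          _ = _ := by rw [Functor.map_comp, Category.assoc] }⟩⟩

end MorphismsToPregliders

section Coend

variable (M : Mod (FF FR Λ))

abbrev CoendGen : Type u := Σ α : Λ, (M.obj.obj (FF.of α) : Type u)

def coendRel : Submodule R (CoendGen M →₀ R) :=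
  Submodule.span R
    ({z | ∃ (α : Λ) (x y : M.obj.obj (FF.of α)), z = Finsupp.single ⟨α, x + y⟩ 1 -
        Finsupp.single ⟨α, x⟩ 1 - Finsupp.single ⟨α, y⟩ 1} ∪
     {z | ∃ (α β : Λ) (h : (FF.of β : FF FR Λ) ⟶ FF.of α) (y : M.obj.obj (FF.of β)),
        z = Finsupp.single ⟨α, M.obj.map h y⟩ 1 - Finsupp.single ⟨β, y⟩ h.1})

/-- The coend `R ⊗_{FF_Λ R} M = (j_! M)(∞)`. -/
abbrev Coend : Type u := (CoendGen M →₀ R) ⧸ coendRel M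

def Coend.mk (α : Λ) : M.obj.obj (FF.of α) →+ Coend M :=
  AddMonoidHom.mk' (fun x => Submodule.Quotient.mk (Finsupp.single ⟨α, x⟩ 1)) fun x y => by
    rw [← Submodule.Quotient.mk_add, Submodule.Quotient.eq, ← sub_sub]
    exact Submodule.subset_span (Or.inl ⟨α, x, y, rfl⟩)

lemma Coend.mk_map {α β : Λ} (h : (FF.of β : FF FR Λ) ⟶ FF.of α) (y : M.obj.obj (FF.of β)) :
    Coend.mk M α (M.obj.map h y) = h.1 • Coend.mk M β y := by
  change Submodule.Quotient.mk _ = h.1 • Submodule.Quotient.mk _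
  rw [← Submodule.Quotient.mk_smul, Finsupp.smul_single, smul_eq_mul, mul_one,
    Submodule.Quotient.eq]
  exact Submodule.subset_span (Or.inr ⟨α, β, h, y, rfl⟩)

lemma Coend.addHom_ext {A : Type*} [AddCommGroup A] {f g : Coend M →+ A}
    (h : ∀ (α : Λ) (r : R) (x : M.obj.obj (FF.of α)),
      f (r • Coend.mk M α x) = g (r • Coend.mk M α x)) : f = g := by
  have hmk : f.comp (coendRel M).mkQ.toAddMonoidHom = g.comp (coendRel M).mkQ.toAddMonoidHom := by
    refine Finsupp.addHom_ext fun ⟨α, x⟩ r => ?_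
    simpa [Coend.mk, ← Submodule.Quotient.mk_smul, Finsupp.smul_single] using h α r x
  ext t
  obtain ⟨t, rfl⟩ := (coendRel M).mkQ_surjective t
  exact DFunLike.congr_fun hmk t

variable {M} {A : Type*} [AddCommGroup A]

def Coend.linearLift [Module R A] (φ : ∀ α : Λ, M.obj.obj (FF.of α) →+ A)
    (hφ : ∀ {α β : Λ} (h : (FF.of β : FF FR Λ) ⟶ FF.of α) (y : M.obj.obj (FF.of β)),
      φ α (M.obj.map h y) = h.1 • φ β y) :
    Coend M →ₗ[R] A :=
  (coendRel M).liftQ (Finsupp.linearCombination R fun i => φ i.1 i.2) (by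
    rw [coendRel, Submodule.span_le]
    rintro z (⟨α, x, y, rfl⟩ | ⟨α, β, h, y, rfl⟩)
    · simp only [SetLike.mem_coe, LinearMap.mem_ker, map_sub, Finsupp.linearCombination_single,
        one_smul, map_add, add_sub_cancel_left, sub_self]
    · simp only [SetLike.mem_coe, LinearMap.mem_ker, map_sub, Finsupp.linearCombination_single,
        one_smul, hφ, sub_self])

variable (ρ : R →+* AddMonoid.End A) (φ : ∀ α : Λ, M.obj.obj (FF.of α) →+ A)
  (hφ : ∀ {α β : Λ} (h : (FF.of β : FF FR Λ) ⟶ FF.of α) (y : M.obj.obj (FF.of β)),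
    φ α (M.obj.map h y) = ρ h.1 (φ β y))

def Coend.lift : Coend M →+ A :=
  letI := Module.compHom A ρ
  (Coend.linearLift φ hφ).toAddMonoidHom

lemma Coend.lift_mk (α : Λ) (x : M.obj.obj (FF.of α)) :
    Coend.lift ρ φ hφ (Coend.mk M α x) = φ α x := by
  let : Module R A := Module.compHom A ρ
  exact (Finsupp.linearCombination_single R 1 (⟨α, x⟩ : CoendGen M)).trans (one_smul R _)

lemma Coend.lift_smul (r : R) (t : Coend M) :
    Coend.lift ρ φ hφ (r • t) = ρ r (Coend.lift ρ φ hφ t) := by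
  let : Module R A := Module.compHom A ρ
  exact (Coend.linearLift φ hφ).map_smul r t

end Coend

section CoendGlider

variable (M : Mod (FF FR Λ))

def coendFiltration : OFF FR Λ → AddSubgroup (Coend M)
  | .of α => (Coend.mk M α).range
  | .infty => ⊤

lemma smul_mem_coendFiltration {X Y : OFF FR Λ} (σ : X ⟶ Y) :
    ∀ v ∈ coendFiltration M X, σ.1 • v ∈ coendFiltration M Y := by
  intro v hv
  cases X with
  | of α =>
    cases Y with
    | of β =>
      obtain ⟨x, rfl⟩ := hv
      exact ⟨M.obj.map σ x, Coend.mk_map M σ x⟩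
    | infty => trivial
  | infty =>
    cases Y with
    | of β =>
      rw [show σ.1 = 0 from AddSubgroup.mem_bot.1 σ.2, zero_smul]
      exact zero_mem _
    | infty => trivial

/-- The preglider `κ (j_! M)`. -/
def coendGlider : Preglid FR Λ :=
  Preglid.ofSubgroups (coendFiltration M) (smul_mem_coendFiltration M)

def coendUnit : M ⟶ (iotaF FR Λ ⋙ jStar FR Λ).obj (coendGlider M) :=
  ⟨{ app := fun ⟨α⟩ => AddCommGrpCat.ofHom (Coend.mk M α).rangeRestrict
     naturality := by
       rintro ⟨α⟩ ⟨β⟩ h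
       ext x
       exact Subtype.ext (Coend.mk_map M h x) }⟩

lemma surjective_coendUnit (X : FF FR Λ) : Function.Surjective (mapp (coendUnit M) X) := by
  obtain ⟨α⟩ := X
  exact (Coend.mk M α).rangeRestrict_surjective

def actionAtInfty (P : Mod (OFF FR Λ)) : R →+* AddMonoid.End (P.obj.obj .infty) where
  toFun r := (P.obj.map (toInfty .infty r)).hom
  map_one' := by rw [toInfty_infty_one, P.obj.map_id]; rfl
  map_mul' r s := by
    change (P.obj.map (toInfty .infty s ≫ toInfty .infty r)).hom = _
    rw [P.obj.map_comp]
    rfl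
  map_zero' := by
    have := P.property
    change (P.obj.map 0).hom = 0
    rw [Functor.map_zero]
    rfl
  map_add' r s := by
    have := P.property
    change (P.obj.map (toInfty .infty r + toInfty .infty s)).hom = _
    rw [Functor.map_add]
    rfl

variable {M} {P : Preglid FR Λ} (g : M ⟶ (iotaF FR Λ ⋙ jStar FR Λ).obj P)

lemma map_toInfty_mapp_map {α β : Λ} (h : (FF.of β : FF FR Λ) ⟶ FF.of α)
    (y : M.obj.obj (FF.of β)) :
    P.obj.obj.map (toInfty (.of α) 1) (mapp g (FF.of α) (M.obj.map h y)) =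
      P.obj.obj.map (toInfty .infty h.1)
        (P.obj.obj.map (toInfty (.of β) 1) (mapp g (FF.of β) y)) := by
  have hnat : mapp g (FF.of α) (M.obj.map h y) =
      P.obj.obj.map ((jF FR Λ).map h) (mapp g (FF.of β) y) :=
    ConcreteCategory.congr_hom (g.hom.naturality h) y
  have hcomp : P.obj.obj.map ((jF FR Λ).map h) ≫ P.obj.obj.map (toInfty (.of α) 1) =
      P.obj.obj.map (toInfty (.of β) 1) ≫ P.obj.obj.map (toInfty .infty h.1) :=
    (P.obj.obj.map_comp _ _).symm.trans
      ((congrArg P.obj.obj.map (comp_toInfty_one ((jF FR Λ).map h))).trans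
        (P.obj.obj.map_comp _ _))
  rw [hnat]
  exact ConcreteCategory.congr_hom hcomp _

def coendEval : Coend M →+ P.obj.obj.obj .infty :=
  Coend.lift (actionAtInfty P.obj)
    (fun α => (mapp g (FF.of α) ≫ P.obj.obj.map (toInfty (.of α) 1)).hom)
    (map_toInfty_mapp_map g)

lemma coendEval_mk (α : Λ) (x : M.obj.obj (FF.of α)) :
    coendEval g (Coend.mk M α x) = P.obj.obj.map (toInfty (.of α) 1) (mapp g (FF.of α) x) :=
  Coend.lift_mk _ _ _ α x

lemma coendEval_smul (r : R) (t : Coend M) :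
    coendEval g (r • t) = P.obj.obj.map (toInfty .infty r) (coendEval g t) :=
  Coend.lift_smul _ _ _ r t

def coendEvalTop : (coendGlider M).obj.obj.obj .infty ⟶ P.obj.obj.obj .infty :=
  AddCommGrpCat.ofHom ((coendEval g).comp (⊤ : AddSubgroup (Coend M)).subtype)

lemma coendEvalTop_mem_range (X : OFF FR Λ) (a : (coendGlider M).obj.obj.obj X) :
    coendEvalTop g ((coendGlider M).obj.obj.map (toInfty X 1) a) ∈
      (P.obj.obj.map (toInfty X (1 : R))).hom.range := by
  cases X with
  | of α =>
    obtain ⟨_, x, rfl⟩ := a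
    refine ⟨mapp g (FF.of α) x, ?_⟩
    change _ = coendEval g ((1 : R) • Coend.mk M α x)
    rw [one_smul, coendEval_mk]
  | infty =>
    refine ⟨coendEvalTop g ((coendGlider M).obj.obj.map (toInfty .infty 1) a), ?_⟩
    rw [toInfty_infty_one, P.obj.obj.map_id]
    rfl

def coendExtend : coendGlider M ⟶ P :=
  Preglid.homOfInfty (coendEvalTop g) (coendEvalTop_mem_range g) fun r => by
    ext v
    exact coendEval_smul g r v.1

lemma coendUnit_comp_coendExtend :
    coendUnit M ≫ (iotaF FR Λ ⋙ jStar FR Λ).map (coendExtend g) = g := by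
  refine InducedCategory.hom_ext (NatTrans.ext (funext fun ⟨α⟩ => ?_))
  ext x
  apply injective_map_toInfty_one P (.of α)
  refine (ConcreteCategory.congr_hom (homOfInftyApp_comp _ (coendEvalTop_mem_range g) (.of α))
    ((coendUnit M).hom.app (FF.of α) x)).trans ?_
  change coendEval g ((1 : R) • Coend.mk M α x) = _
  rw [one_smul, coendEval_mk]
  rfl

lemma pgapp_infty_smul_mk (u : coendGlider M ⟶ P) (α : Λ) (r : R) (x : M.obj.obj (FF.of α)) :
    pgapp FR Λ u .infty ⟨r • Coend.mk M α x, trivial⟩ =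
      P.obj.obj.map (toInfty (.of α) r)
        (mapp (coendUnit M ≫ (iotaF FR Λ ⋙ jStar FR Λ).map u) (FF.of α) x) :=
  ConcreteCategory.congr_hom (pgapp_naturality u (toInfty (.of α) r))
    ((coendUnit M).hom.app (FF.of α) x)

lemma coendUnit_comp_injective :
    Function.Injective fun u : coendGlider M ⟶ P =>
      coendUnit M ≫ (iotaF FR Λ ⋙ jStar FR Λ).map u := by
  intro u₁ u₂ h
  have hext : (pgapp FR Λ u₁ .infty).hom.comp AddSubgroup.topEquiv.symm.toAddMonoidHom =
      (pgapp FR Λ u₂ .infty).hom.comp AddSubgroup.topEquiv.symm.toAddMonoidHom :=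
    Coend.addHom_ext M fun α r x => by
      change pgapp FR Λ u₁ .infty ⟨_, trivial⟩ = pgapp FR Λ u₂ .infty ⟨_, trivial⟩
      rw [pgapp_infty_smul_mk, pgapp_infty_smul_mk]
      exact congrArg (fun k => P.obj.obj.map (toInfty (.of α) r) (mapp k (FF.of α) x)) h
  refine Preglid.hom_ext ?_
  ext ⟨t, _⟩
  exact DFunLike.congr_fun hext t

variable (M P) in
def coendGliderEquiv : (coendGlider M ⟶ P) ≃ (M ⟶ (iotaF FR Λ ⋙ jStar FR Λ).obj P) :=
  Equiv.ofBijective _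
    ⟨coendUnit_comp_injective, fun g => ⟨coendExtend g, coendUnit_comp_coendExtend g⟩⟩

variable (FR Λ) in
def coendGliderFunctor : Mod (FF FR Λ) ⥤ Preglid FR Λ :=
  Adjunction.leftAdjointOfEquiv (G := iotaF FR Λ ⋙ jStar FR Λ) coendGliderEquiv
    fun _ _ _ _ _ => by
      change coendUnit _ ≫ _ = (coendUnit _ ≫ _) ≫ _
      rw [(iotaF FR Λ ⋙ jStar FR Λ).map_comp, Category.assoc]

variable (FR Λ) in
def coendGliderAdjunction : coendGliderFunctor FR Λ ⊣ iotaF FR Λ ⋙ jStar FR Λ :=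
  Adjunction.adjunctionOfEquivLeft _ _

lemma epi_coendGliderAdjunction_unit_app (M : Mod (FF FR Λ)) :
    Epi ((coendGliderAdjunction FR Λ).unit.app M) := by
  rw [coendGliderAdjunction, Adjunction.adjunctionOfEquivLeft_unit_app]
  exact Mod.epi_of_surjective _ (surjective_coendUnit M)

end CoendGlider

section GlidAdjunction

lemma sigmaClass_of_isIso {N N' : Preglid FR Λ} (f : N ⟶ N')
    [IsIso ((iotaF FR Λ ⋙ jStar FR Λ).map f)] : SigmaClass FR Λ f := by
  intro α
  have := (AdditiveFunctor.forget (FF FR Λ) AddCommGrpCat.{u}).map_isIso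
    ((iotaF FR Λ ⋙ jStar FR Λ).map f)
  exact NatIso.isIso_app_of_isIso
    ((AdditiveFunctor.forget _ _).map ((iotaF FR Λ ⋙ jStar FR Λ).map f)) (FF.of α)

variable {L : Mod (FF FR Λ) ⥤ Preglid FR Λ} (adj : L ⊣ iotaF FR Λ ⋙ jStar FR Λ)

lemma counit_mem_sigmaClass (N : Preglid FR Λ) : SigmaClass FR Λ (adj.counit.app N) := by
  have := epi_coendGliderAdjunction_unit_app ((iotaF FR Λ ⋙ jStar FR Λ).obj N)
  have := (coendGliderAdjunction FR Λ).epi_unit_app_of_epi adj ((iotaF FR Λ ⋙ jStar FR Λ).obj N)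
  have := adj.isIso_map_counit_app_of_epi N
  exact sigmaClass_of_isIso _

def prefragAdjunction : etaF FR Λ ⋙ L ⊣ jRes FR Λ :=
  adj.restrictFullyFaithful (iC := etaF FR Λ) (iD := 𝟭 _) (L := etaF FR Λ ⋙ L) (R := jRes FR Λ)
    (ObjectProperty.fullyFaithfulι _) (Functor.FullyFaithful.id _) (Iso.refl _) (Iso.refl _)

lemma prefragAdjunction_counit_app (N : Preglid FR Λ) :
    (prefragAdjunction adj).counit.app N = adj.counit.app N := by
  have h := adj.map_restrictFullyFaithful_counit_app (iC := etaF FR Λ) (iD := 𝟭 _)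
    (L := etaF FR Λ ⋙ L) (R := jRes FR Λ) (ObjectProperty.fullyFaithfulι _)
    (Functor.FullyFaithful.id _) (Iso.refl _) (Iso.refl _) N
  simp only [Functor.id_map, Iso.refl_inv, NatTrans.id_app] at h
  exact h.trans ((Category.id_comp _).trans
    ((congrArg (· ≫ adj.counit.app N) (L.map_id _)).trans (Category.id_comp _)))

instance : (QF FR Λ).IsLocalization (SigmaClass FR Λ) :=
  inferInstanceAs ((SigmaClass FR Λ).Q.IsLocalization _)

def glidAdjunction : (etaF FR Λ ⋙ L) ⋙ QF FR Λ ⊣ phiF FR Λ :=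
  (prefragAdjunction adj).compLocalization (SigmaClass FR Λ) (QF FR Λ) (eqToIso (phiF_fac FR Λ))

lemma isIso_glidAdjunction_counit : IsIso (glidAdjunction adj).counit :=
  (prefragAdjunction adj).isIso_compLocalization_counit _ _ _ fun N => by
    rw [prefragAdjunction_counit_app]
    exact counit_mem_sigmaClass adj N

end GlidAdjunction

section Statements

variable {Γ : Type u} [Group Γ] [PartialOrder Γ]
  [CovariantClass Γ Γ (· * ·) (· ≤ ·)] [CovariantClass Γ Γ (Function.swap (· * ·)) (· ≤ ·)]
  {R : Type u} [Ring R]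

/-- The functor `φ : Glid FR ⥤ Prefrag FR` (the unique functor with
`Q ⋙ φ = j^*`, constructed above as `phiF`) is fully faithful and admits a left adjoint,
namely `ψ := Q ∘ j_L` where `j_L = κ ∘ j_! ∘ η` for `κ` any left adjoint of `ι` and `j_!`
any left adjoint of `j^*`. -/
theorem statement_6 (FR : RingFiltration Γ R) (Λ : Set Γ) :
    (phiF FR Λ).Full ∧ (phiF FR Λ).Faithful ∧
    (∀ (κ : Mod (OFF FR Λ) ⥤ Preglid FR Λ), (κ ⊣ iotaF FR Λ) →
      ∀ (jbang : Mod (FF FR Λ) ⥤ Mod (OFF FR Λ)), (jbang ⊣ jStar FR Λ) →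
      Nonempty (((etaF FR Λ ⋙ jbang ⋙ κ) ⋙ QF FR Λ) ⊣ phiF FR Λ)) := by
  have := isIso_glidAdjunction_counit (coendGliderAdjunction FR Λ)
  have hφ := (glidAdjunction (coendGliderAdjunction FR Λ)).fullyFaithfulROfIsIsoCounit
  exact ⟨hφ.full, hφ.faithful, fun κ hκ jbang hjb => ⟨glidAdjunction (hjb.comp hκ)⟩⟩

end Statements

end GliderPaper
end
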